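/- arXiv:1408.1741 — 8 statements merged into one kernel-verified Lean document; each statement's English description precedes it below -/
import Mathlib

section
/- Let α > 0 and k ∈ ℝ. Let u : ℝ → ℝ be continuously differentiable with u and u′ square-integrable on ℝ and u(y) → 0 as y → −∞. Then for every x ∈ ℝ, (1/α)∫_{−∞}^{x} e^{(y−x)/α} ((α²/2)u′(y)² + u(y)² + 2k u(y)) dy ≥ (u(x)+k)²/2 − k². -/
/-!
Put `e y = exp ((y - x) / α)` and `W y = e y * ((u y + k) ^ 2 / 2 - k ^ 2)`. Then `W → 0` at
`-∞`, `W x` is the right-hand side, and completing the square gives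
`(e / α) * ((α² / 2) u'² + u² + 2 k u) - W' = e * (α u' - (u + k))² / (2 α) ≥ 0`,
so integrating `W'` over `(-∞, x]` gives the inequality. Since `e` is integrable and bounded by
`1` on `(-∞, x]`, it lies in `L²` there, and `e` times any quadratic expression in the `L²`
functions `u`, `u'` is integrable on `(-∞, x]`.
-/

open MeasureTheory Filter Set Real

theorem integrableOn_exp_sub_div_Iic {α : ℝ} (hα : 0 < α) (x : ℝ) :
    IntegrableOn (fun y => exp ((y - x) / α)) (Iic x) := by
  refine IntegrableOn.congr_fun
    ((integrableOn_exp_mul_Iic (inv_pos.2 hα) x).const_mul (exp (-x / α)))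
    (fun y _ => ?_) measurableSet_Iic
  rw [← exp_add]
  ring_nf

theorem integrableOn_exp_sub_div_mul {α : ℝ} (hα : 0 < α) {x : ℝ} {f : ℝ → ℝ}
    (hf : IntegrableOn f (Iic x)) :
    IntegrableOn (fun y => exp ((y - x) / α) * f y) (Iic x) :=
  Integrable.bdd_mul (c := 1) hf
    (by fun_prop : Continuous fun y => exp ((y - x) / α)).aestronglyMeasurable <|
    ae_restrict_of_forall_mem measurableSet_Iic fun y hy => by
      rw [norm_of_nonneg (exp_pos _).le, exp_le_one_iff]
      exact div_nonpos_of_nonpos_of_nonneg (sub_nonpos.2 hy) hα.le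

theorem memLp_two_exp_sub_div_Iic {α : ℝ} (hα : 0 < α) (x : ℝ) :
    MemLp (fun y => exp ((y - x) / α)) 2 (volume.restrict (Iic x)) := by
  refine (memLp_two_iff_integrable_sq
    (by fun_prop : Continuous fun y => exp ((y - x) / α)).aestronglyMeasurable).2 ?_
  simpa only [sq, IntegrableOn] using
    integrableOn_exp_sub_div_mul hα (integrableOn_exp_sub_div_Iic hα x)

theorem integrableOn_exp_sub_div_mul_quadratic {α : ℝ} (hα : 0 < α) (x : ℝ)
    {v w : ℝ → ℝ} (hv : MemLp v 2) (hw : MemLp w 2) (a b c d e f : ℝ) :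
    IntegrableOn (fun y => exp ((y - x) / α) *
      (a * v y ^ 2 + b * w y ^ 2 + c * (v y * w y) + d * v y + e * w y + f)) (Iic x) := by
  have hE := memLp_two_exp_sub_div_Iic hα x
  have hv2 := integrableOn_exp_sub_div_mul hα (x := x) hv.integrable_sq.integrableOn
  have hw2 := integrableOn_exp_sub_div_mul hα (x := x) hw.integrable_sq.integrableOn
  have hvw := integrableOn_exp_sub_div_mul hα (x := x) (hv.integrable_mul hw).integrableOn
  have hEv : IntegrableOn _ (Iic x) := hE.integrable_mul (hv.restrict _)
  have hEw : IntegrableOn _ (Iic x) := hE.integrable_mul (hw.restrict _)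
  refine IntegrableOn.congr_fun ((((((hv2.const_mul a).add (hw2.const_mul b)).add
    (hvw.const_mul c)).add (hEv.const_mul d)).add (hEw.const_mul e)).add
    ((integrableOn_exp_sub_div_Iic hα x).const_mul f)) (fun y _ => ?_) measurableSet_Iic
  simp only [Pi.add_apply, Pi.mul_apply]
  ring

theorem hasDerivAt_exp_sub_div_mul {α x y g' : ℝ} {g : ℝ → ℝ} (hg : HasDerivAt g g' y) :
    HasDerivAt (fun z => exp ((z - x) / α) * g z) (exp ((y - x) / α) * (g y / α + g')) y := by
  have he : HasDerivAt (fun z => exp ((z - x) / α)) (exp ((y - x) / α) * (1 / α)) y :=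
    (((hasDerivAt_id y).sub_const x).div_const α).exp
  refine (he.mul hg).congr_deriv ?_
  ring

theorem tendsto_exp_sub_div_mul_atBot {α x L : ℝ} (hα : 0 < α) {g : ℝ → ℝ}
    (hg : Tendsto g atBot (nhds L)) :
    Tendsto (fun z => exp ((z - x) / α) * g z) atBot (nhds 0) := by
  have he : Tendsto (fun z => exp ((z - x) / α)) atBot (nhds 0) :=
    tendsto_exp_atBot.comp ((tendsto_atBot_add_const_right _ (-x) tendsto_id).atBot_div_const hα)
  simpa using he.mul hg

theorem mul_energy_deriv_le {α e : ℝ} (hα : 0 < α) (he : 0 ≤ e) (k v w : ℝ) :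
    e * (((w + k) ^ 2 / 2 - k ^ 2) / α + (w + k) * v) ≤
      1 / α * (e * (α ^ 2 / 2 * v ^ 2 + w ^ 2 + 2 * k * w)) := by
  have hsq : 1 / α * (e * (α ^ 2 / 2 * v ^ 2 + w ^ 2 + 2 * k * w)) -
      e * (((w + k) ^ 2 / 2 - k ^ 2) / α + (w + k) * v) =
        e * (α * v - (w + k)) ^ 2 / (2 * α) := by
    field_simp
    ring
  have : 0 ≤ e * (α * v - (w + k)) ^ 2 / (2 * α) := by positivity
  linarith

/-- Lemma 3.1 (first inequality): for `u ∈ H¹` vanishing at `-∞`,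
`(p - α ∂ₓp) ∗ ((α²/2)uₓ² + u² + 2ku) ≥ (u+k)²/2 - k²`, written as the
explicit one-sided exponential integral. -/
theorem dgh_convolution_estimate_left
    (α k : ℝ) (hα : 0 < α)
    (u u' : ℝ → ℝ)
    (hderiv : ∀ x, HasDerivAt u (u' x) x)
    (hcont : Continuous u')
    (hu_sq : Integrable (fun y => (u y) ^ 2))
    (hu'_sq : Integrable (fun y => (u' y) ^ 2))
    (hlim : Tendsto u atBot (nhds 0)) :
    ∀ x : ℝ,
      (1 / α) * ∫ y in Set.Iic x,
          Real.exp ((y - x) / α) *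
            ((α ^ 2 / 2) * (u' y) ^ 2 + (u y) ^ 2 + 2 * k * u y)
        ≥ (u x + k) ^ 2 / 2 - k ^ 2 := by
  intro x
  have hu_cont : Continuous u := continuous_iff_continuousAt.2 fun y => (hderiv y).continuousAt
  have hu : MemLp u 2 := (memLp_two_iff_integrable_sq hu_cont.aestronglyMeasurable).2 hu_sq
  have hu' : MemLp u' 2 := (memLp_two_iff_integrable_sq hcont.aestronglyMeasurable).2 hu'_sq
  have hW : ∀ y ∈ Iic x, HasDerivAt (fun z => exp ((z - x) / α) * ((u z + k) ^ 2 / 2 - k ^ 2))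
      (exp ((y - x) / α) * (((u y + k) ^ 2 / 2 - k ^ 2) / α + (u y + k) * u' y)) y := fun y _ =>
    hasDerivAt_exp_sub_div_mul ((((hderiv y).add_const k).pow 2).div_const 2 |>.sub_const _
      |>.congr_deriv (by ring))
  have hW_int : IntegrableOn (fun y => exp ((y - x) / α) *
      (((u y + k) ^ 2 / 2 - k ^ 2) / α + (u y + k) * u' y)) (Iic x) :=
    (integrableOn_exp_sub_div_mul_quadratic hα x hu hu' (1 / (2 * α)) 0 1 (k / α) k
      (-k ^ 2 / (2 * α))).congr_fun (fun y _ => by ring) measurableSet_Iic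
  have hQ_int : IntegrableOn (fun y => exp ((y - x) / α) *
      (α ^ 2 / 2 * u' y ^ 2 + u y ^ 2 + 2 * k * u y)) (Iic x) :=
    (integrableOn_exp_sub_div_mul_quadratic hα x hu hu' 1 (α ^ 2 / 2) 0 (2 * k) 0 0).congr_fun
      (fun y _ => by ring) measurableSet_Iic
  have hW_lim := tendsto_exp_sub_div_mul_atBot (x := x) hα
    (((hlim.add_const k).pow 2).div_const 2 |>.sub_const (k ^ 2))
  rw [ge_iff_le, ← integral_const_mul]
  calc (u x + k) ^ 2 / 2 - k ^ 2 = ∫ y in Iic x,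
        exp ((y - x) / α) * (((u y + k) ^ 2 / 2 - k ^ 2) / α + (u y + k) * u' y) := by
        rw [integral_Iic_of_hasDerivAt_of_tendsto' hW hW_int hW_lim]
        simp
    _ ≤ _ := setIntegral_mono_on hW_int (hQ_int.const_mul _) measurableSet_Iic fun y _ =>
        mul_energy_deriv_le hα (exp_pos _).le k (u' y) (u y)
end

section
/- Let α > 0 and k ∈ ℝ. Let u : ℝ → ℝ be continuously differentiable with u and u′ square-integrable on ℝ and u(y) → 0 as y → +∞. Then for every x ∈ ℝ, (1/α)∫_{x}^{∞} e^{(x−y)/α} ((α²/2)u′(y)² + u(y)² + 2k u(y)) dy ≥ (u(x)+k)²/2 − k². -/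
/-!
Put `E(y) = e^{(x-y)/α}` and `F(y) = E(y)((u(y)+k)² - 2k²)/2`, so that `F(x)` is the right-hand side
and `F(y) → 0` as `y → ∞`. Completing the square gives
`F' + E·((α²/2)u'² + u² + 2ku)/α = E·(αu' + u + k)²/(2α) ≥ 0`,
so `F + (1/α)∫ₓ^· E·(…)` is nondecreasing and its value at `x` is at most its limit at `+∞`.
-/

open MeasureTheory Filter Set Topology

theorem exists_norm_le_on_Ici_of_tendsto_atTop {E : Type*} [SeminormedAddCommGroup E]
    {f : ℝ → E} {l : E} (hf : Continuous f)
    (hfl : Tendsto f atTop (𝓝 l)) (a : ℝ) : ∃ C, ∀ y ∈ Ici a, ‖f y‖ ≤ C := by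
  obtain ⟨s, hs, hs_bdd⟩ := Metric.exists_isBounded_image_of_tendsto hfl
  obtain ⟨b, hb⟩ := mem_atTop_sets.1 hs
  obtain ⟨C, hC⟩ := ((isCompact_Icc.image hf).isBounded.union hs_bdd).exists_norm_le
  refine ⟨C, fun y (hy : a ≤ y) => hC _ ?_⟩
  rcases le_total y b with hyb | hby
  · exact Or.inl ⟨y, ⟨hy, hyb⟩, rfl⟩
  · exact Or.inr ⟨y, hb y hby, rfl⟩

theorem le_add_integral_Ioi_of_hasDerivAt_of_nonneg {F F' g : ℝ → ℝ} {a L : ℝ}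
    (hF : ∀ y, HasDerivAt F (F' y) y) (hg : Continuous g) (hgi : IntegrableOn g (Ioi a))
    (hnonneg : ∀ y, 0 ≤ F' y + g y) (hFL : Tendsto F atTop (𝓝 L)) :
    F a ≤ L + ∫ y in Ioi a, g y := by
  set Φ : ℝ → ℝ := fun y => F y + ∫ t in a..y, g t
  have hΦ : ∀ y, HasDerivAt Φ (F' y + g y) y := fun y =>
    (hF y).add (hg.integral_hasStrictDerivAt a y).hasDerivAt
  have hΦ_mono : Monotone Φ :=
    monotone_of_deriv_nonneg (fun y => (hΦ y).differentiableAt) fun y =>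
      (hΦ y).deriv ▸ hnonneg y
  have hΦ_lim : Tendsto Φ atTop (𝓝 (L + ∫ y in Ioi a, g y)) :=
    hFL.add (intervalIntegral_tendsto_integral_Ioi a hgi tendsto_id)
  simpa [Φ] using hΦ_mono.ge_of_tendsto hΦ_lim a

section ExpWeight

variable {α : ℝ} (x : ℝ)

theorem hasDerivAt_exp_sub_div (y : ℝ) :
    HasDerivAt (fun y => Real.exp ((x - y) / α)) (-Real.exp ((x - y) / α) / α) y :=
  (((hasDerivAt_id' y).const_sub x).div_const α).exp.congr_deriv (by ring)

theorem exp_sub_div_le_one (hα : 0 ≤ α) {y : ℝ} (hxy : x ≤ y) : Real.exp ((x - y) / α) ≤ 1 :=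
  Real.exp_le_one_iff.2 (div_nonpos_of_nonpos_of_nonneg (sub_nonpos.2 hxy) hα)

theorem tendsto_exp_sub_div_atTop (hα : 0 < α) :
    Tendsto (fun y => Real.exp ((x - y) / α)) atTop (𝓝 0) :=
  Real.tendsto_exp_atBot.comp <|
    (tendsto_atBot_add_const_left atTop x tendsto_neg_atTop_atBot).atBot_div_const hα

theorem integrableOn_exp_sub_div_Ioi (hα : 0 < α) (a : ℝ) :
    IntegrableOn (fun y => Real.exp ((x - y) / α)) (Ioi a) := by
  refine IntegrableOn.congr_fun
    ((exp_neg_integrableOn_Ioi a (inv_pos.2 hα)).const_mul (Real.exp (x / α)))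
    (fun y _ => ?_) measurableSet_Ioi
  rw [← Real.exp_add]
  congr 1
  ring

end ExpWeight

theorem integrableOn_exp_sub_div_mul_energy {α : ℝ} (hα : 0 < α) (c k x : ℝ) {u u' : ℝ → ℝ}
    {l : ℝ} (hu : Continuous u) (hu'_sq : Integrable (fun y => u' y ^ 2))
    (hlim : Tendsto u atTop (𝓝 l)) :
    IntegrableOn (fun y => Real.exp ((x - y) / α) * (c * u' y ^ 2 + u y ^ 2 + 2 * k * u y))
      (Ioi x) := by
  have hE : Continuous fun y => Real.exp ((x - y) / α) := by fun_prop
  have hE_u' : IntegrableOn (fun y => Real.exp ((x - y) / α) * u' y ^ 2) (Ioi x) :=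
    hu'_sq.integrableOn.bdd_mul hE.aestronglyMeasurable <|
      ae_restrict_of_forall_mem measurableSet_Ioi fun y hy => by
        rw [Real.norm_eq_abs, abs_of_pos (Real.exp_pos _)]
        exact exp_sub_div_le_one x hα.le (le_of_lt hy)
  have hv : Continuous fun y => u y ^ 2 + 2 * k * u y := by fun_prop
  obtain ⟨C, hC⟩ := exists_norm_le_on_Ici_of_tendsto_atTop hv
    ((hlim.pow 2).add (hlim.const_mul (2 * k))) x
  have hE_v : IntegrableOn (fun y => Real.exp ((x - y) / α) * (u y ^ 2 + 2 * k * u y)) (Ioi x) :=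
    (integrableOn_exp_sub_div_Ioi x hα x).mul_bdd hv.aestronglyMeasurable <|
      ae_restrict_of_forall_mem measurableSet_Ioi fun y hy => hC y (mem_Ici_of_Ioi hy)
  refine IntegrableOn.congr_fun ((hE_u'.const_mul c).add hE_v) (fun y _ => ?_) measurableSet_Ioi
  simp only [Pi.add_apply]
  ring

theorem dgh_convolution_estimate_right_general
    (α k : ℝ) (hα : 0 < α)
    (u u' : ℝ → ℝ)
    (hderiv : ∀ x, HasDerivAt u (u' x) x)
    (hcont : Continuous u')
    (hu'_sq : Integrable (fun y => (u' y) ^ 2))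
    (hlim : Tendsto u atTop (nhds 0)) :
    ∀ x : ℝ,
      (1 / α) * ∫ y in Set.Ici x,
          Real.exp ((x - y) / α) *
            ((α ^ 2 / 2) * (u' y) ^ 2 + (u y) ^ 2 + 2 * k * u y)
        ≥ (u x + k) ^ 2 / 2 - k ^ 2 := by
  intro x
  have hu : Continuous u := continuous_iff_continuousAt.2 fun y => (hderiv y).continuousAt
  set E : ℝ → ℝ := fun y => Real.exp ((x - y) / α)
  set F : ℝ → ℝ := fun y => E y * ((u y + k) ^ 2 - 2 * k ^ 2) / 2
  set F' : ℝ → ℝ := fun y =>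
    (-E y / α * ((u y + k) ^ 2 - 2 * k ^ 2) + E y * (2 * (u y + k) * u' y)) / 2
  have hF : ∀ y, HasDerivAt F (F' y) y := fun y => by
    have hG : HasDerivAt (fun y => (u y + k) ^ 2 - 2 * k ^ 2) (2 * (u y + k) * u' y) y :=
      ((((hderiv y).add_const k).fun_pow 2).sub_const (2 * k ^ 2)).congr_deriv (by ring)
    exact ((hasDerivAt_exp_sub_div x y).fun_mul hG).div_const 2
  have hF_lim : Tendsto F atTop (𝓝 0) := by
    simpa using ((tendsto_exp_sub_div_atTop x hα).mul
      (((hlim.add_const k).pow 2).sub_const (2 * k ^ 2))).div_const 2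
  have hsq : ∀ y, F' y + 1 / α * (E y * ((α ^ 2 / 2) * u' y ^ 2 + u y ^ 2 + 2 * k * u y)) =
      E y * (α * u' y + u y + k) ^ 2 / (2 * α) := fun y => by
    simp only [F']
    field_simp
    ring
  have hmain := le_add_integral_Ioi_of_hasDerivAt_of_nonneg hF
    (g := fun y => 1 / α * (E y * ((α ^ 2 / 2) * u' y ^ 2 + u y ^ 2 + 2 * k * u y)))
    (by fun_prop)
    ((integrableOn_exp_sub_div_mul_energy hα _ k x hu hu'_sq hlim).const_mul (1 / α))
    (fun y => by rw [hsq]; positivity) hF_lim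
  rw [integral_const_mul, zero_add, ← integral_Ici_eq_integral_Ioi] at hmain
  simp only [F, E, sub_self, zero_div, Real.exp_zero] at hmain
  linarith

/-- Lemma 3.1 (second inequality): for `u ∈ H¹` vanishing at `+∞`,
`(p + α ∂ₓp) ∗ ((α²/2)uₓ² + u² + 2ku) ≥ (u+k)²/2 - k²`, written as the
explicit one-sided exponential integral. -/
theorem dgh_convolution_estimate_right
    (α k : ℝ) (hα : 0 < α)
    (u u' : ℝ → ℝ)
    (hderiv : ∀ x, HasDerivAt u (u' x) x)
    (hcont : Continuous u')
    (hu_sq : Integrable (fun y => (u y) ^ 2))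
    (hu'_sq : Integrable (fun y => (u' y) ^ 2))
    (hlim : Tendsto u atTop (nhds 0)) :
    ∀ x : ℝ,
      (1 / α) * ∫ y in Set.Ici x,
          Real.exp ((x - y) / α) *
            ((α ^ 2 / 2) * (u' y) ^ 2 + (u y) ^ 2 + 2 * k * u y)
        ≥ (u x + k) ^ 2 / 2 - k ^ 2 :=
  dgh_convolution_estimate_right_general α k hα u u' hderiv hcont hu'_sq hlim
end

section
/- Let α > 0 and k ∈ ℝ. Let u : ℝ → ℝ be continuously differentiable with u and u′ square-integrable on ℝ and u(y) → 0 as |y| → ∞. Then for every x ∈ ℝ, ∫_ℝ (1/(2α)) e^{−|x−y|/α} ((α²/2)u′(y)² + (u(y)+k)²) dy ≥ (u(x)+k)²/2. -/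
open MeasureTheory Filter Set Real

/-!
Put `f = u + k`. On the half-line `y ≤ x` the kernel is `e^{(y-x)/α}`, and
`d/dy (e^{(y-x)/α} f²/4) = e^{(y-x)/α} (f² + 2f·αu')/(4α)`, which is at most the integrand
`e^{(y-x)/α} (2f² + (αu')²)/(4α)` because their difference is a multiple of `(f - αu')²`.
Since `f(y)² → k²` while the exponential vanishes at `-∞`, integrating over `(-∞, x]` bounds the
left half of the convolution from below by `f(x)²/4`. Reflecting `y ↦ -y` gives the same bound
for the right half.
-/

lemma abs_sq_add_two_mul_le (a b : ℝ) : |a ^ 2 + 2 * a * b| ≤ 2 * a ^ 2 + b ^ 2 := by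
  rw [abs_le]
  constructor <;> nlinarith [sq_nonneg (a - b), sq_nonneg (a + b)]

lemma integrable_exp_neg_abs : Integrable fun z : ℝ => exp (-|z|) := by
  refine (integrable_inv_one_add_sq.const_mul 2).mono' (by fun_prop) (ae_of_all _ fun z => ?_)
  have hexp := quadratic_le_exp_of_nonneg (abs_nonneg z)
  rw [norm_of_nonneg (exp_pos _).le, exp_neg]
  calc (exp |z|)⁻¹ ≤ ((1 + z ^ 2) / 2)⁻¹ :=
        inv_anti₀ (by positivity) (by nlinarith [sq_abs z, abs_nonneg z])
    _ = 2 * (1 + z ^ 2)⁻¹ := by rw [inv_div, div_eq_mul_inv]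

lemma integrable_exp_neg_abs_sub_div {α : ℝ} (hα : 0 < α) (x : ℝ) :
    Integrable fun y => exp (-|x - y| / α) := by
  simpa [abs_div, abs_of_pos hα, neg_div] using
    (integrable_exp_neg_abs.comp_div hα.ne').comp_sub_left x

lemma integrable_convolution_integrand {α : ℝ} (hα : 0 < α) (k : ℝ) {u u' : ℝ → ℝ}
    (hu : Continuous u) (hu' : Continuous u') (hu_sq : Integrable fun y => u y ^ 2)
    (hu'_sq : Integrable fun y => u' y ^ 2) (x : ℝ) :
    Integrable fun y => (1 / (2 * α)) * exp (-|x - y| / α) *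
      ((α ^ 2 / 2) * u' y ^ 2 + (u y + k) ^ 2) := by
  have hW := integrable_exp_neg_abs_sub_div hα x
  have hdom := (((hu'_sq.const_mul (α ^ 2 / 2)).add (hu_sq.const_mul 2)).add
    (hW.const_mul (2 * k ^ 2))).const_mul (1 / (2 * α))
  refine hdom.mono' (by fun_prop) (ae_of_all _ fun y => ?_)
  have hWpos : 0 < exp (-|x - y| / α) := exp_pos _
  have hWle : exp (-|x - y| / α) ≤ 1 :=
    exp_le_one_iff.2 (div_nonpos_of_nonpos_of_nonneg (neg_nonpos.2 (abs_nonneg _)) hα.le)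
  rw [norm_of_nonneg (by positivity), mul_assoc]
  simp only [Pi.add_apply]
  gcongr
  have hsq : (u y + k) ^ 2 ≤ 2 * u y ^ 2 + 2 * k ^ 2 := by nlinarith [sq_nonneg (u y - k)]
  have hu'W := mul_le_mul_of_nonneg_right hWle (by positivity : 0 ≤ α ^ 2 / 2 * u' y ^ 2)
  have huW := mul_le_mul_of_nonneg_right hWle (sq_nonneg (u y))
  nlinarith [mul_le_mul_of_nonneg_left hsq hWpos.le]

theorem le_setIntegral_Iic_of_hasDerivAt_of_abs_le {G g F : ℝ → ℝ} {a : ℝ}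
    (hderiv : ∀ y ∈ Iic a, HasDerivAt G (g y) y) (hG : Tendsto G atBot (nhds 0))
    (hg : AEStronglyMeasurable g (volume.restrict (Iic a))) (hF : IntegrableOn F (Iic a))
    (hgF : ∀ y ∈ Iic a, |g y| ≤ F y) :
    G a ≤ ∫ y in Iic a, F y := by
  have hg_int : IntegrableOn g (Iic a) :=
    Integrable.mono' hF hg (ae_restrict_of_forall_mem measurableSet_Iic hgF)
  calc G a = ∫ y in Iic a, g y := by
        rw [integral_Iic_of_hasDerivAt_of_tendsto' hderiv hg_int hG, sub_zero]
    _ ≤ ∫ y in Iic a, F y := setIntegral_mono_on hg_int hF measurableSet_Iic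
        fun y hy => (le_abs_self _).trans (hgF y hy)

theorem sq_div_four_le_setIntegral_Iic {α : ℝ} (hα : 0 < α) (k : ℝ) {u u' : ℝ → ℝ}
    (hderiv : ∀ x, HasDerivAt u (u' x) x) (hu' : Continuous u')
    (hu_sq : Integrable fun y => u y ^ 2) (hu'_sq : Integrable fun y => u' y ^ 2)
    (hbot : Tendsto u atBot (nhds 0)) (x : ℝ) :
    (u x + k) ^ 2 / 4 ≤ ∫ y in Iic x, (1 / (2 * α)) * exp (-|x - y| / α) *
      ((α ^ 2 / 2) * u' y ^ 2 + (u y + k) ^ 2) := by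
  have hu : Continuous u := continuous_iff_continuousAt.2 fun y => (hderiv y).continuousAt
  set E : ℝ → ℝ := fun y => exp ((y - x) / α)
  have hE : ∀ y, HasDerivAt E (E y / α) y := fun y => by
    simpa [E, div_eq_mul_inv, mul_comm] using (((hasDerivAt_id y).sub_const x).div_const α).exp
  have hderivG : ∀ y, HasDerivAt (fun y => E y * (u y + k) ^ 2 / 4)
      (E y / (4 * α) * ((u y + k) ^ 2 + 2 * (u y + k) * (α * u' y))) y := fun y => by
    refine (((hE y).fun_mul (((hderiv y).add_const k).fun_pow 2)).div_const 4).congr_deriv ?_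
    field_simp
    ring
  have hlimG : Tendsto (fun y => E y * (u y + k) ^ 2 / 4) atBot (nhds 0) := by
    have hElim : Tendsto E atBot (nhds 0) :=
      tendsto_exp_atBot.comp ((tendsto_atBot_add_const_right _ (-x) tendsto_id).atBot_div_const hα)
    simpa using (hElim.mul ((hbot.add_const k).pow 2)).div_const 4
  have hbound : ∀ y ∈ Iic x, |E y / (4 * α) * ((u y + k) ^ 2 + 2 * (u y + k) * (α * u' y))| ≤
      (1 / (2 * α)) * exp (-|x - y| / α) * ((α ^ 2 / 2) * u' y ^ 2 + (u y + k) ^ 2) := by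
    intro y hy
    have hxy : -|x - y| / α = (y - x) / α := by
      rw [abs_of_nonneg (sub_nonneg.2 hy)]; ring
    rw [hxy, abs_mul, abs_of_pos (by positivity)]
    calc E y / (4 * α) * |(u y + k) ^ 2 + 2 * (u y + k) * (α * u' y)|
        ≤ E y / (4 * α) * (2 * (u y + k) ^ 2 + (α * u' y) ^ 2) := by
          gcongr; exact abs_sq_add_two_mul_le _ _
      _ = _ := by field_simp; ring
  convert le_setIntegral_Iic_of_hasDerivAt_of_abs_le (fun y _ => hderivG y) hlimG
    (by fun_prop) (integrable_convolution_integrand hα k hu hu' hu_sq hu'_sq x).integrableOn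
    hbound using 1
  simp [E]

theorem sq_div_four_le_setIntegral_Ioi {α : ℝ} (hα : 0 < α) (k : ℝ) {u u' : ℝ → ℝ}
    (hderiv : ∀ x, HasDerivAt u (u' x) x) (hu' : Continuous u')
    (hu_sq : Integrable fun y => u y ^ 2) (hu'_sq : Integrable fun y => u' y ^ 2)
    (htop : Tendsto u atTop (nhds 0)) (x : ℝ) :
    (u x + k) ^ 2 / 4 ≤ ∫ y in Ioi x, (1 / (2 * α)) * exp (-|x - y| / α) *
      ((α ^ 2 / 2) * u' y ^ 2 + (u y + k) ^ 2) := by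
  have h := sq_div_four_le_setIntegral_Iic hα k (u := fun y => u (-y)) (u' := fun y => -u' (-y))
    (fun y => by simpa [Function.comp_def] using (hderiv (-y)).comp y (hasDerivAt_neg y))
    (hu'.comp continuous_neg).neg hu_sq.comp_neg (by simpa using hu'_sq.comp_neg)
    (htop.comp tendsto_neg_atBot_atTop) (-x)
  rw [← integral_comp_neg_Ioi] at h
  simpa only [neg_neg, neg_sq, sub_neg_eq_add, neg_add_eq_sub, abs_sub_comm _ x] using h

/-- Lemma 3.2: `p ∗ ((α²/2)uₓ² + (u+k)²) ≥ (u+k)²/2`. -/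
theorem dgh_convolution_estimate_full
    (α k : ℝ) (hα : 0 < α)
    (u u' : ℝ → ℝ)
    (hderiv : ∀ x, HasDerivAt u (u' x) x)
    (hcont : Continuous u')
    (hu_sq : Integrable (fun y => (u y) ^ 2))
    (hu'_sq : Integrable (fun y => (u' y) ^ 2))
    (hbot : Tendsto u atBot (nhds 0))
    (htop : Tendsto u atTop (nhds 0)) :
    ∀ x : ℝ,
      (∫ y : ℝ, (1 / (2 * α)) * Real.exp (-|x - y| / α) *
          ((α ^ 2 / 2) * (u' y) ^ 2 + (u y + k) ^ 2))
        ≥ (u x + k) ^ 2 / 2 := by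
  intro x
  have hu : Continuous u := continuous_iff_continuousAt.2 fun y => (hderiv y).continuousAt
  have hF := integrable_convolution_integrand hα k hu hcont hu_sq hu'_sq x
  have hsplit := intervalIntegral.integral_Iic_add_Ioi (b := x) hF.integrableOn hF.integrableOn
  have hleft := sq_div_four_le_setIntegral_Iic hα k hderiv hcont hu_sq hu'_sq hbot x
  have hright := sq_div_four_le_setIntegral_Ioi hα k hderiv hcont hu_sq hu'_sq htop x
  linarith
end

section
/- Let α > 0, k ∈ ℝ, c ∈ ℝ, y₀ ∈ ℝ, and define u : ℝ → ℝ by u(x) = c e^{−|x−y₀|/α} − k. Then for every x ≤ y₀ (where u is differentiable with u′(y) = (c/α)e^{(y−y₀)/α} for y < y₀), equality holds: (1/α)∫_{−∞}^{x} e^{(y−x)/α} ((α²/2)u′(y)² + u(y)² + 2k u(y)) dy = (u(x)+k)²/2 − k². -/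
open MeasureTheory Real Set

/-! On `(-∞, y₀]` the profile is `u + k = c e^{(y-y₀)/α}`, so `(α²/2)u'² + u² + 2ku = (3/2)(u+k)² - k²`.
Since `(u(y)+k)² = (u(x)+k)² e^{2(y-x)/α}`, the integrand is a combination of `e^{3(y-x)/α}` and
`e^{(y-x)/α}`, whose integrals over `(-∞, x]` are `α/3` and `α`. -/

lemma integrableOn_exp_mul_sub_Iic {a : ℝ} (ha : 0 < a) (x : ℝ) :
    IntegrableOn (fun y => exp (a * (y - x))) (Iic x) := by
  simp_rw [mul_sub, exp_sub]
  exact (integrableOn_exp_mul_Iic ha x).div_const _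

lemma integral_exp_mul_sub_Iic {a : ℝ} (ha : 0 < a) (x : ℝ) :
    ∫ y in Iic x, exp (a * (y - x)) = 1 / a := by
  simp_rw [mul_sub, exp_sub]
  rw [integral_div, integral_exp_mul_Iic ha, div_div_cancel_left' (exp_pos _).ne', one_div]

/-- Sharpness of the convolution inequality of Lemma 3.1: for the peakon-type
profile `u(x) = c e^{-|x-y₀|/α} - k` (whose derivative for `y < y₀` is
`(c/α) e^{(y-y₀)/α}`), equality holds for every `x ≤ y₀`. -/
theorem dgh_convolution_estimate_sharp
    (α k c y₀ : ℝ) (hα : 0 < α)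
    (u : ℝ → ℝ)
    (hu : ∀ x, u x = c * Real.exp (-|x - y₀| / α) - k) :
    ∀ x ≤ y₀,
      (1 / α) * ∫ y in Set.Iic x,
          Real.exp ((y - x) / α) *
            ((α ^ 2 / 2) * ((c / α) * Real.exp ((y - y₀) / α)) ^ 2
              + (u y) ^ 2 + 2 * k * u y)
        = (u x + k) ^ 2 / 2 - k ^ 2 := by
  intro x hx
  have hpeak : ∀ y ≤ y₀, u y = c * exp ((y - y₀) / α) - k := fun y hy => by
    rw [hu, abs_of_nonpos (by linarith), neg_neg]
  have hpt : ∀ y ∈ Iic x, exp ((y - x) / α) *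
      ((α ^ 2 / 2) * ((c / α) * exp ((y - y₀) / α)) ^ 2 + (u y) ^ 2 + 2 * k * u y)
      = 3 / 2 * (u x + k) ^ 2 * exp (3 / α * (y - x)) - k ^ 2 * exp (1 / α * (y - x)) := by
    intro y hy
    have hexp : exp ((y - x) / α) * exp ((y - y₀) / α) ^ 2
        = exp ((x - y₀) / α) ^ 2 * exp (3 / α * (y - x)) := by
      simp only [← exp_nat_mul, ← exp_add]
      congr 1
      ring
    have hcoef : α ^ 2 / 2 * (c / α * exp ((y - y₀) / α)) ^ 2
        = c ^ 2 / 2 * exp ((y - y₀) / α) ^ 2 := by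
      field_simp
    rw [hcoef, hpeak y (le_trans hy hx), hpeak x hx, one_div_mul_eq_div]
    linear_combination (3 * c ^ 2 / 2) * hexp
  rw [setIntegral_congr_fun measurableSet_Iic hpt,
    integral_sub ((integrableOn_exp_mul_sub_Iic (by positivity) x).const_mul _)
      ((integrableOn_exp_mul_sub_Iic (by positivity) x).const_mul _),
    integral_const_mul, integral_const_mul, integral_exp_mul_sub_Iic (by positivity),
    integral_exp_mul_sub_Iic (by positivity)]
  field_simp
end

section
/- Let α > 0, c ∈ ℝ, y₀ ∈ ℝ, and define u : ℝ → ℝ by u(x) = c e^{−|x−y₀|/α}, with almost-everywhere derivative g(x) = −(c/α) sign(x−y₀) e^{−|x−y₀|/α}. Then ∫_ℝ u(x)² dx = αc², ∫_ℝ α² g(x)² dx = αc², and sup_{x∈ℝ} |u(x)| = |c| = (1/√(2α)) (∫_ℝ (u² + α²g²) dx)^{1/2}; i.e., equality is attained in the Sobolev embedding inequality ‖u‖_{L^∞} ≤ (1/√(2α))‖u‖_{H¹_α}. -/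
open MeasureTheory Filter

/-!
Since `sign² = 1` off `y₀`, the two integrands `u²` and `α²g²` agree almost everywhere, and
`∫ e^{-2|x-y₀|/α} dx = α` gives each of them the value `αc²`; so `‖u‖²_{H¹_α} = 2αc²`.
On the other hand `|u|` is maximal at the peak `x = y₀`, where it equals `|c|`.
-/

lemma Real.sign_sq_of_ne_zero {r : ℝ} (hr : r ≠ 0) : Real.sign r ^ 2 = 1 := by
  rcases Real.sign_apply_eq_of_ne_zero r hr with h | h <;> simp [h]

lemma integral_exp_neg_mul_abs {b : ℝ} (hb : 0 < b) :
    ∫ x : ℝ, Real.exp (-(b * |x|)) = 2 / b := by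
  have hhalf : ∫ x in Set.Ioi (0 : ℝ), Real.exp (-(b * x)) = 1 / b := by
    simpa only [mul_zero, integral_exp_neg_Ioi, neg_zero, Real.exp_zero, smul_eq_mul, mul_one,
      one_div] using integral_comp_mul_left_Ioi (fun x => Real.exp (-x)) 0 hb
  rw [integral_comp_abs (f := fun x => Real.exp (-(b * x))), hhalf]
  ring

lemma integral_exp_neg_mul_abs_sub {b : ℝ} (y : ℝ) (hb : 0 < b) :
    ∫ x : ℝ, Real.exp (-(b * |x - y|)) = 2 / b :=
  (integral_sub_right_eq_self (fun x => Real.exp (-(b * |x|))) y).trans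
    (integral_exp_neg_mul_abs hb)

lemma integral_sq_mul_exp_neg_abs_sub_div {α : ℝ} (c y : ℝ) (hα : 0 < α) :
    ∫ x : ℝ, (c * Real.exp (-|x - y| / α)) ^ 2 = α * c ^ 2 := by
  have hsq : ∀ x : ℝ, (c * Real.exp (-|x - y| / α)) ^ 2 =
      c ^ 2 * Real.exp (-(2 / α * |x - y|)) := fun x => by
    rw [mul_pow, ← Real.exp_nat_mul]
    congr 2
    push_cast
    ring
  simp_rw [hsq]
  rw [integral_const_mul, integral_exp_neg_mul_abs_sub y (by positivity)]
  field_simp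

lemma sq_mul_sq_sign_mul_exp_eq {α x y : ℝ} (c : ℝ) (hα : α ≠ 0) (hx : x ≠ y) :
    α ^ 2 * (-(c / α) * Real.sign (x - y) * Real.exp (-|x - y| / α)) ^ 2 =
      (c * Real.exp (-|x - y| / α)) ^ 2 := by
  have hsign := Real.sign_sq_of_ne_zero (sub_ne_zero.2 hx)
  calc α ^ 2 * (-(c / α) * Real.sign (x - y) * Real.exp (-|x - y| / α)) ^ 2
      = α ^ 2 * (c / α) ^ 2 * Real.sign (x - y) ^ 2 * Real.exp (-|x - y| / α) ^ 2 := by ring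
    _ = (c * Real.exp (-|x - y| / α)) ^ 2 := by rw [hsign]; field_simp

lemma iSup_abs_mul_exp_neg_abs_sub_div {α : ℝ} (c y : ℝ) (hα : 0 ≤ α) :
    ⨆ x : ℝ, |c * Real.exp (-|x - y| / α)| = |c| := by
  have habs : ∀ x, |c * Real.exp (-|x - y| / α)| = |c| * Real.exp (-|x - y| / α) :=
    fun x => by rw [abs_mul, abs_of_pos (Real.exp_pos _)]
  have hle : ∀ x, |c * Real.exp (-|x - y| / α)| ≤ |c| := fun x => by
    rw [habs]
    refine mul_le_of_le_one_right (abs_nonneg c) (Real.exp_le_one_iff.2 ?_)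
    exact div_nonpos_of_nonpos_of_nonneg (neg_nonpos.2 (abs_nonneg _)) hα
  refine le_antisymm (ciSup_le hle) ?_
  calc |c| = |c * Real.exp (-|y - y| / α)| := by simp
    _ ≤ _ := le_ciSup ⟨|c|, Set.forall_mem_range.2 hle⟩ y

lemma abs_eq_one_div_sqrt_mul_sqrt_mul_sq {a : ℝ} (c : ℝ) (ha : 0 < a) :
    |c| = 1 / Real.sqrt a * Real.sqrt (a * c ^ 2) := by
  have hsqrt : Real.sqrt a ≠ 0 := by positivity
  rw [Real.sqrt_mul ha.le, Real.sqrt_sq_eq_abs]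
  field_simp

/-- Equality in the Sobolev embedding `‖u‖_{L^∞} ≤ (1/√(2α))‖u‖_{H¹_α}` is
attained for the peakon profile `u(x) = c e^{-|x-y₀|/α}`, with weak derivative
`g(x) = -(c/α) sign(x-y₀) e^{-|x-y₀|/α}`. -/
theorem dgh_sobolev_embedding_sharp
    (α c y₀ : ℝ) (hα : 0 < α)
    (u g : ℝ → ℝ)
    (hu : ∀ x, u x = c * Real.exp (-|x - y₀| / α))
    (hg : ∀ x, g x = -(c / α) * Real.sign (x - y₀) * Real.exp (-|x - y₀| / α)) :
    (∫ x : ℝ, (u x) ^ 2) = α * c ^ 2 ∧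
    (∫ x : ℝ, α ^ 2 * (g x) ^ 2) = α * c ^ 2 ∧
    (⨆ x : ℝ, |u x|) = |c| ∧
    |c| = (1 / Real.sqrt (2 * α)) *
        Real.sqrt (∫ x : ℝ, ((u x) ^ 2 + α ^ 2 * (g x) ^ 2)) := by
  have hu2 : ∫ x : ℝ, (u x) ^ 2 = α * c ^ 2 := by
    simpa only [hu] using integral_sq_mul_exp_neg_abs_sub_div c y₀ hα
  have hae : (fun x => α ^ 2 * (g x) ^ 2) =ᵐ[volume] fun x => (u x) ^ 2 := by
    filter_upwards [compl_mem_ae_iff.mpr (measure_singleton y₀)] with x hx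
    rw [hg, hu]
    exact sq_mul_sq_sign_mul_exp_eq c hα.ne' hx
  have hnorm : ∫ x : ℝ, ((u x) ^ 2 + α ^ 2 * (g x) ^ 2) = 2 * α * c ^ 2 := by
    have hsum : (fun x => (u x) ^ 2 + α ^ 2 * (g x) ^ 2) =ᵐ[volume] fun x => 2 * (u x) ^ 2 := by
      filter_upwards [hae] with x hx
      rw [hx]
      ring
    rw [integral_congr_ae hsum, integral_const_mul, hu2]
    ring
  refine ⟨hu2, (integral_congr_ae hae).trans hu2,
    by simpa only [hu] using iSup_abs_mul_exp_neg_abs_sub_div c y₀ hα.le, ?_⟩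
  rw [hnorm]
  exact abs_eq_one_div_sqrt_mul_sqrt_mul_sq c (by positivity)
end

section
/- Let α > 0, c₀, γ ∈ ℝ, k = (c₀ + γ/α²)/2, and T ∈ (0, ∞]. Let u : [0,T) × ℝ → ℝ be three times continuously differentiable, set m = u − α²∂ₓ²u, and suppose the momentum form of the DGH equation holds pointwise: ∂ₜm + c₀∂ₓu + u∂ₓm + 2m∂ₓu + γ∂ₓ³u = 0 on [0,T) × ℝ. Let q : [0,T) × ℝ → ℝ be twice continuously differentiable with q(0,x) = x and ∂ₜq(t,x) = u(t,q(t,x)) − γ/α². Then for all (t,x) ∈ [0,T) × ℝ, (m(t,q(t,x)) + c₀/2 + γ/(2α²)) · (∂ₓq(t,x))² = m(0,x) + c₀/2 + γ/(2α²). -/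
/-!
Along a trajectory `s ↦ q(s,x)` the PDE says that the momentum satisfies
`D m/Ds = mₜ + (u - γ/α²) mₓ = -2 (m + k) uₓ` with `k = c₀/2 + γ/(2α²)`, while differentiating
`qₜ = u(t,q) - γ/α²` in `x` gives `D qₓ/Ds = uₓ qₓ`. Hence `(m + k) qₓ²` has zero derivative in
time and keeps its value `m(0,x) + k` at `t = 0`, where `qₓ = 1`. The chain rule along the
trajectory needs `u` and `uₓₓ` to be jointly differentiable up to the boundary `t = 0` of the
strip; this holds because `uₓ` and `uₓₓ` are the `x`-components of derivatives within the strip of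
the `C³` function `u`, and derivatives within the strip are unique as it is convex and has interior.
-/

open Set

theorem convex_setOf_nonneg_coe_lt (T : EReal) : Convex ℝ {a : ℝ | 0 ≤ a ∧ (a : EReal) < T} :=
  Set.OrdConnected.convex
    ⟨fun _ ha _ hb _ hc => ⟨ha.1.trans hc.1, (EReal.coe_le_coe_iff.2 hc.2).trans_lt hb.2⟩⟩

theorem uniqueDiffOn_setOf_nonneg_coe_lt {T : EReal} (hT : 0 < T) :
    UniqueDiffOn ℝ {a : ℝ | 0 ≤ a ∧ (a : EReal) < T} := by
  obtain ⟨r, hr0, hrT⟩ := EReal.lt_iff_exists_real_btwn.mp hT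
  have hIoo : Ioo 0 r ⊆ {a : ℝ | 0 ≤ a ∧ (a : EReal) < T} := fun a ha =>
    ⟨ha.1.le, (EReal.coe_le_coe_iff.2 ha.2.le).trans_lt hrT⟩
  refine uniqueDiffOn_convex (convex_setOf_nonneg_coe_lt T) ?_
  exact (nonempty_Ioo.2 (EReal.coe_lt_coe_iff.1 hr0)).mono (interior_maximal hIoo isOpen_Ioo)

theorem Convex.eq_of_hasDerivWithinAt_zero {s : Set ℝ} {f : ℝ → ℝ} (hs : Convex ℝ s)
    (hf : ∀ x ∈ s, HasDerivWithinAt f 0 s x) {x y : ℝ} (hx : x ∈ s) (hy : y ∈ s) :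
    f x = f y := by
  have := hs.norm_image_sub_le_of_norm_hasDerivWithin_le (C := 0) hf (fun _ _ => by simp) hy hx
  rw [zero_mul, norm_le_zero_iff, sub_eq_zero] at this
  exact this

section Strip

variable {I : Set ℝ} {W : ℝ × ℝ → ℝ} {L : ℝ × ℝ →L[ℝ] ℝ} {s y : ℝ}

theorem HasFDerivWithinAt.hasDerivAt_snd_slice (hW : HasFDerivWithinAt W L (I ×ˢ univ) (s, y))
    (hs : s ∈ I) : HasDerivAt (fun y' => W (s, y')) (L (0, 1)) y := by
  have hline : HasDerivAt (fun y' : ℝ => (s, y')) ((0 : ℝ), (1 : ℝ)) y :=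
    (hasDerivAt_const y s).prodMk (hasDerivAt_id y)
  rw [← hasDerivWithinAt_univ]
  exact hW.comp_hasDerivWithinAt y hline.hasDerivWithinAt fun _ _ => mk_mem_prod hs (mem_univ _)

theorem HasFDerivWithinAt.hasDerivWithinAt_fst_slice
    (hW : HasFDerivWithinAt W L (I ×ˢ univ) (s, y)) :
    HasDerivWithinAt (fun s' => W (s', y)) (L (1, 0)) I s :=
  hW.comp_hasDerivWithinAt s ((hasDerivAt_id s).prodMk (hasDerivAt_const s y)).hasDerivWithinAt
    fun _ ha => mk_mem_prod ha (mem_univ _)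

theorem ContDiffOn.contDiffOn_partial_snd {n : WithTop ℕ∞} {Wy : ℝ → ℝ → ℝ}
    (hW : ContDiffOn ℝ (n + 1) W (I ×ˢ univ)) (hI : UniqueDiffOn ℝ I)
    (hWy : ∀ s ∈ I, ∀ y, HasDerivAt (fun y' => W (s, y')) (Wy s y) y) :
    ContDiffOn ℝ n (fun p : ℝ × ℝ => Wy p.1 p.2) (I ×ˢ univ) := by
  refine ((hW.fderivWithin (hI.prod uniqueDiffOn_univ) le_rfl).clm_apply
    (contDiffOn_const (c := ((0 : ℝ), (1 : ℝ))))).congr fun p hp => ?_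
  have hL := (hW.differentiableOn (by simp) p hp).hasFDerivWithinAt
  exact (hWy p.1 hp.1 p.2).unique (hL.hasDerivAt_snd_slice hp.1)

theorem HasFDerivWithinAt.hasDerivWithinAt_comp_graph {W : ℝ → ℝ → ℝ} {c : ℝ → ℝ}
    {a b v : ℝ} (hW : HasFDerivWithinAt (fun p : ℝ × ℝ => W p.1 p.2) L (I ×ˢ univ) (s, c s))
    (hs : s ∈ I) (hI : UniqueDiffWithinAt ℝ I s)
    (ha : HasDerivWithinAt (fun s' => W s' (c s)) a I s) (hb : HasDerivAt (W s) b (c s))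
    (hc : HasDerivWithinAt c v I s) :
    HasDerivWithinAt (fun s' => W s' (c s')) (a + v * b) I s := by
  have hL : L (1, v) = a + v * b := by
    have hsplit : ((1 : ℝ), v) = ((1 : ℝ), (0 : ℝ)) + v • ((0 : ℝ), (1 : ℝ)) := by simp
    rw [hsplit, map_add, map_smul, smul_eq_mul, hI.eq_deriv I ha hW.hasDerivWithinAt_fst_slice,
      hb.unique (hW.hasDerivAt_snd_slice hs)]
  rw [← hL]
  exact hW.comp_hasDerivWithinAt s ((hasDerivWithinAt_id s I).prodMk hc)
    fun _ ha => mk_mem_prod ha (mem_univ _)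

end Strip

theorem dgh_deriv_momentum_mul_sq_eq_zero {α c₀ γ u ut ux uxx uxxx utxx : ℝ} (qx : ℝ) (hα : α ≠ 0)
    (hPDE : (ut - α ^ 2 * utxx) + c₀ * ux + u * (ux - α ^ 2 * uxxx)
        + 2 * (u - α ^ 2 * uxx) * ux + γ * uxxx = 0) :
    ((ut + (u - γ / α ^ 2) * ux) - α ^ 2 * (utxx + (u - γ / α ^ 2) * uxxx)) * qx ^ 2
      + ((u - α ^ 2 * uxx) + c₀ / 2 + γ / (2 * α ^ 2)) * (2 * qx * (ux * qx)) = 0 := by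
  field_simp
  linear_combination α ^ 2 * qx ^ 2 * hPDE

/-- The fundamental identity for the momentum `m = u - α²uₓₓ` of the DGH
equation `mₜ + c₀uₓ + umₓ + 2muₓ + γuₓₓₓ = 0`: along the particle
trajectories `q`, `(m(t,q(t,x)) + c₀/2 + γ/(2α²))·(∂ₓq(t,x))² = m₀(x) + c₀/2 + γ/(2α²)`. -/
theorem dgh_momentum_identity
    (α c₀ γ : ℝ) (hα : 0 < α)
    (T : EReal) (hT : (0 : EReal) < T)
    (u ut ux uxx uxxx utxx : ℝ → ℝ → ℝ)
    (huC3 : ContDiffOn ℝ 3 (fun p : ℝ × ℝ => u p.1 p.2)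
      {p : ℝ × ℝ | 0 ≤ p.1 ∧ (p.1 : EReal) < T})
    (hut : ∀ t x : ℝ, 0 ≤ t → (t : EReal) < T →
      HasDerivAt (fun s => u s x) (ut t x) t)
    (hux : ∀ t x : ℝ, 0 ≤ t → (t : EReal) < T →
      HasDerivAt (fun y => u t y) (ux t x) x)
    (huxx : ∀ t x : ℝ, 0 ≤ t → (t : EReal) < T →
      HasDerivAt (fun y => ux t y) (uxx t x) x)
    (huxxx : ∀ t x : ℝ, 0 ≤ t → (t : EReal) < T →
      HasDerivAt (fun y => uxx t y) (uxxx t x) x)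
    (hutxx : ∀ t x : ℝ, 0 ≤ t → (t : EReal) < T →
      HasDerivAt (fun s => uxx s x) (utxx t x) t)
    -- the momentum form of the DGH equation: `mₜ + c₀uₓ + umₓ + 2muₓ + γuₓₓₓ = 0`,
    -- with `m = u - α²uₓₓ`, `mₜ = uₜ - α²uₜₓₓ`, `mₓ = uₓ - α²uₓₓₓ`
    (hPDE : ∀ t x : ℝ, 0 ≤ t → (t : EReal) < T →
      (ut t x - α ^ 2 * utxx t x) + c₀ * ux t x
        + u t x * (ux t x - α ^ 2 * uxxx t x)
        + 2 * (u t x - α ^ 2 * uxx t x) * ux t x + γ * uxxx t x = 0)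
    (q qx qtx : ℝ → ℝ → ℝ)
    (hq0 : ∀ x, q 0 x = x)
    (hqt : ∀ t x : ℝ, 0 ≤ t → (t : EReal) < T →
      HasDerivAt (fun s => q s x) (u t (q t x) - γ / α ^ 2) t)
    (hqx : ∀ t x : ℝ, 0 ≤ t → (t : EReal) < T →
      HasDerivAt (fun y => q t y) (qx t x) x)
    -- `q` is twice continuously differentiable with equal mixed partial
    -- derivatives: `∂ₜ∂ₓq = ∂ₓ∂ₜq = ∂ₓ(u(t, q(t,·)) - γ/α²)`.
    (hmix_t : ∀ t x : ℝ, 0 ≤ t → (t : EReal) < T →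
      HasDerivAt (fun s => qx s x) (qtx t x) t)
    (hmix_x : ∀ t x : ℝ, 0 ≤ t → (t : EReal) < T →
      HasDerivAt (fun y => u t (q t y) - γ / α ^ 2) (qtx t x) x) :
    ∀ t x : ℝ, 0 ≤ t → (t : EReal) < T →
      ((u t (q t x) - α ^ 2 * uxx t (q t x)) + c₀ / 2 + γ / (2 * α ^ 2))
          * (qx t x) ^ 2
        = (u 0 x - α ^ 2 * uxx 0 x) + c₀ / 2 + γ / (2 * α ^ 2) := by
  intro t x ht htT
  set I : Set ℝ := {a : ℝ | 0 ≤ a ∧ (a : EReal) < T}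
  have hI : UniqueDiffOn ℝ I := uniqueDiffOn_setOf_nonneg_coe_lt hT
  have hstrip : {p : ℝ × ℝ | 0 ≤ p.1 ∧ (p.1 : EReal) < T} = I ×ˢ univ := by ext; simp [I]
  rw [hstrip] at huC3
  have hu_diff := huC3.differentiableOn (by simp)
  have huxx_diff := ((huC3.contDiffOn_partial_snd (n := 2) hI fun s hs y => hux s y hs.1 hs.2)
    |>.contDiffOn_partial_snd (n := 1) hI fun s hs y => huxx s y hs.1 hs.2).differentiableOn
    (by simp)
  have hF : ∀ s ∈ I, HasDerivWithinAt (fun s => ((u s (q s x) - α ^ 2 * uxx s (q s x))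
      + c₀ / 2 + γ / (2 * α ^ 2)) * qx s x ^ 2) 0 I s := by
    intro s hsI
    have ⟨hs, hsT⟩ := hsI
    have hq := (hqt s x hs hsT).hasDerivWithinAt (s := I)
    have hu_along := (hu_diff _ ⟨hsI, trivial⟩).hasFDerivWithinAt.hasDerivWithinAt_comp_graph hsI
      (hI s hsI) (hut s _ hs hsT).hasDerivWithinAt (hux s _ hs hsT) hq
    have huxx_along := (huxx_diff _ ⟨hsI, trivial⟩).hasFDerivWithinAt.hasDerivWithinAt_comp_graph
      hsI (hI s hsI) (hutxx s _ hs hsT).hasDerivWithinAt (huxxx s _ hs hsT) hq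
    have hqtx : qtx s x = ux s (q s x) * qx s x :=
      (hmix_x s x hs hsT).unique (((hux s _ hs hsT).comp x (hqx s x hs hsT)).sub_const _)
    refine ((((hu_along.fun_sub (huxx_along.const_mul (α ^ 2))).add_const (c₀ / 2)).add_const
      (γ / (2 * α ^ 2))).mul ((hmix_t s x hs hsT).hasDerivWithinAt.fun_pow 2)).congr_deriv ?_
    rw [hqtx]
    linear_combination dgh_deriv_momentum_mul_sq_eq_zero (qx s x) hα.ne' (hPDE s (q s x) hs hsT)
  have hqx0 : qx 0 x = 1 := (hqx 0 x le_rfl hT).unique (by simpa [hq0] using hasDerivAt_id' x)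
  simpa [hq0, hqx0] using
    (convex_setOf_nonneg_coe_lt T).eq_of_hasDerivWithinAt_zero hF ⟨ht, htT⟩ ⟨le_rfl, hT⟩
end

section
/- Let t₀ ∈ ℝ and T ∈ (t₀, ∞]. Suppose g : [t₀, T) → ℝ is differentiable, g(t₀) < 0, and g′(t) ≤ −(1/4)g(t)² for all t ∈ [t₀, T). Then T ≤ t₀ + 4/|g(t₀)|; in particular T < ∞. -/
/-!
On every interval `[a, b]` on which `g' ≤ -c g²` with `c ≥ 0`, `g` is nonincreasing, hence stays
negative, and `1/g - c x` is nondecreasing because `(1/g)' = -g'/g² ≥ c`. As `1/g(b) < 0`, this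
gives `c (b - a) < -1/g(a)`, which bounds the length of every interval `[t₀, t] ⊆ [t₀, T)`.
-/

open Set

section Riccati

variable {a b c : ℝ} {g g' : ℝ → ℝ}

lemma neg_of_hasDerivWithinAt_le_neg_mul_sq (hc : 0 ≤ c)
    (hderiv : ∀ x ∈ Icc a b, HasDerivWithinAt g (g' x) (Icc a b) x)
    (hineq : ∀ x ∈ Icc a b, g' x ≤ -c * g x ^ 2) (hga : g a < 0) :
    ∀ x ∈ Icc a b, g x < 0 := by
  have hanti : AntitoneOn g (Icc a b) :=
    antitoneOn_of_hasDerivWithinAt_nonpos (convex_Icc a b)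
      (fun x hx ↦ (hderiv x hx).continuousWithinAt)
      (fun x hx ↦ (hderiv x (interior_subset hx)).mono interior_subset)
      (fun x hx ↦ (hineq x (interior_subset hx)).trans
        (by nlinarith [sq_nonneg (g x)]))
  intro x hx
  exact (hanti (left_mem_Icc.2 (hx.1.trans hx.2)) hx hx.1).trans_lt hga

lemma monotoneOn_inv_sub_mul_of_hasDerivWithinAt_le_neg_mul_sq (hc : 0 ≤ c)
    (hderiv : ∀ x ∈ Icc a b, HasDerivWithinAt g (g' x) (Icc a b) x)
    (hineq : ∀ x ∈ Icc a b, g' x ≤ -c * g x ^ 2) (hga : g a < 0) :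
    MonotoneOn (fun x ↦ (g x)⁻¹ - c * x) (Icc a b) := by
  have hneg := neg_of_hasDerivWithinAt_le_neg_mul_sq hc hderiv hineq hga
  have hderiv' : ∀ x ∈ Icc a b, HasDerivWithinAt (fun x ↦ (g x)⁻¹ - c * x)
      (-g' x / g x ^ 2 - c) (Icc a b) x := fun x hx ↦
    ((hderiv x hx).inv (hneg x hx).ne).sub
      (((hasDerivWithinAt_id x _).const_mul c).congr_deriv (mul_one c))
  refine monotoneOn_of_hasDerivWithinAt_nonneg (convex_Icc a b)
    (fun x hx ↦ (hderiv' x hx).continuousWithinAt)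
    (fun x hx ↦ (hderiv' x (interior_subset hx)).mono interior_subset) fun x hx ↦ ?_
  have hgx : 0 < g x ^ 2 := by nlinarith [hneg x (interior_subset hx)]
  rw [sub_nonneg, le_div_iff₀ hgx]
  linarith [hineq x (interior_subset hx)]

lemma mul_sub_lt_neg_inv_of_hasDerivWithinAt_le_neg_mul_sq (hc : 0 ≤ c) (hab : a ≤ b)
    (hderiv : ∀ x ∈ Icc a b, HasDerivWithinAt g (g' x) (Icc a b) x)
    (hineq : ∀ x ∈ Icc a b, g' x ≤ -c * g x ^ 2) (hga : g a < 0) :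
    c * (b - a) < -(g a)⁻¹ := by
  have hmono := monotoneOn_inv_sub_mul_of_hasDerivWithinAt_le_neg_mul_sq hc hderiv hineq hga
    (left_mem_Icc.2 hab) (right_mem_Icc.2 hab) hab
  have hgb : (g b)⁻¹ < 0 := inv_lt_zero.2 <|
    neg_of_hasDerivWithinAt_le_neg_mul_sq hc hderiv hineq hga b (right_mem_Icc.2 hab)
  simp only at hmono
  linarith

end Riccati

theorem riccati_blowup_general
    (t₀ : ℝ) (T : EReal)
    (g g' : ℝ → ℝ)
    (hderiv : ∀ t : ℝ, t₀ ≤ t → (t : EReal) < T →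
      HasDerivWithinAt g (g' t) {s : ℝ | t₀ ≤ s ∧ (s : EReal) < T} t)
    (hg0 : g t₀ < 0)
    (hineq : ∀ t : ℝ, t₀ ≤ t → (t : EReal) < T → g' t ≤ -(1 / 4) * (g t) ^ 2) :
    T ≤ ((t₀ + 4 / |g t₀| : ℝ) : EReal) ∧ T < ⊤ := by
  have hlength : ∀ t : ℝ, t₀ ≤ t → (t : EReal) < T → t < t₀ + 4 / |g t₀| := by
    intro t ht₀ htT
    have hsub : Icc t₀ t ⊆ {s : ℝ | t₀ ≤ s ∧ (s : EReal) < T} := fun s hs ↦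
      ⟨hs.1, (EReal.coe_le_coe_iff.2 hs.2).trans_lt htT⟩
    have h := mul_sub_lt_neg_inv_of_hasDerivWithinAt_le_neg_mul_sq (by norm_num) ht₀
      (fun s hs ↦ (hderiv s (hsub hs).1 (hsub hs).2).mono hsub)
      (fun s hs ↦ hineq s (hsub hs).1 (hsub hs).2) hg0
    rw [abs_of_neg hg0, div_neg, div_eq_mul_inv]
    linarith
  have hmain : T ≤ ((t₀ + 4 / |g t₀| : ℝ) : EReal) := by
    refine EReal.le_of_forall_lt_iff_le.1 fun z hz ↦ ?_
    by_contra! hzT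
    have hpos : 0 < 4 / |g t₀| := div_pos four_pos (abs_pos.2 hg0.ne)
    have hz' : t₀ + 4 / |g t₀| < z := EReal.coe_lt_coe_iff.1 hz
    exact (hlength z (by linarith) hzT).not_gt hz'
  exact ⟨hmain, hmain.trans_lt (EReal.coe_lt_top _)⟩

/-- Riccati-type blow-up lemma: if `g` is differentiable on `[t₀, T)` with
`g(t₀) < 0` and `g′ ≤ -(1/4)g²` there, then `T ≤ t₀ + 4/|g(t₀)|`; in
particular `T < ∞`. -/
theorem riccati_blowup
    (t₀ : ℝ) (T : EReal) (hT : (t₀ : EReal) < T)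
    (g g' : ℝ → ℝ)
    (hderiv : ∀ t : ℝ, t₀ ≤ t → (t : EReal) < T →
      HasDerivWithinAt g (g' t) {s : ℝ | t₀ ≤ s ∧ (s : EReal) < T} t)
    (hg0 : g t₀ < 0)
    (hineq : ∀ t : ℝ, t₀ ≤ t → (t : EReal) < T → g' t ≤ -(1 / 4) * (g t) ^ 2) :
    T ≤ ((t₀ + 4 / |g t₀| : ℝ) : EReal) ∧ T < ⊤ :=
  riccati_blowup_general t₀ T g g' hderiv hg0 hineq
end

section
/- Let T ∈ (0, ∞] and let A, B : [0,T) → ℝ be differentiable functions satisfying A(0) > 0, B(0) < 0, and, for all t ∈ [0,T), A′(t) ≥ −(1/2)A(t)B(t) and B′(t) ≤ (1/2)A(t)B(t). Then T ≤ 2/√(−A(0)B(0)); in particular T < ∞. -/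
/-!
While `A > 0 > B`, the hypotheses make `A` nondecreasing and `B` nonincreasing, so by a
first-exit-time argument the signs persist on all of `[0, T)`. Then `h = √(-AB)` satisfies
`(h²)' = -(A'B + AB') ≥ (-AB)(A - B)/2 ≥ h³` by AM-GM (`A - B ≥ 2h`), i.e. `h' ≥ h²/2`.
Hence `1/h + t/2` is nonincreasing, and since `1/h > 0` every `t < T` satisfies
`t/2 < 1/h(0)`.
-/

open Filter Set

theorem IsClosed.Icc_subset_of_forall_Ico_subset {α : Type*} [ConditionallyCompleteLinearOrder α]
    [TopologicalSpace α] [OrderTopology α] {a b : α} {U : Set α}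
    (hU : IsClosed (Icc a b \ U)) (hstep : ∀ t ∈ Icc a b, Ico a t ⊆ U → t ∈ U) :
    Icc a b ⊆ U := by
  by_contra hsub
  obtain ⟨s, hs⟩ := not_subset_iff_exists_mem_notMem.mp hsub
  have hbdd : BddBelow (Icc a b \ U) := ⟨a, fun x hx ↦ hx.1.1⟩
  have hexit := hU.csInf_mem ⟨s, hs.1, hs.2⟩ hbdd
  refine hexit.2 (hstep _ hexit.1 fun x hx ↦ ?_)
  by_contra hxU
  exact (csInf_le hbdd ⟨⟨hx.1, hx.2.le.trans hexit.1.2⟩, hxU⟩).not_gt hx.2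

theorem pos_and_neg_of_monotone_in_quadrant {A B A' B' : ℝ → ℝ} {a b : ℝ}
    (hAc : ContinuousOn A (Icc a b)) (hBc : ContinuousOn B (Icc a b))
    (hA : ∀ t ∈ Ioo a b, HasDerivAt A (A' t) t) (hB : ∀ t ∈ Ioo a b, HasDerivAt B (B' t) t)
    (hAa : 0 < A a) (hBa : B a < 0)
    (hA' : ∀ t ∈ Ioo a b, 0 < A t → B t < 0 → 0 ≤ A' t)
    (hB' : ∀ t ∈ Ioo a b, 0 < A t → B t < 0 → B' t ≤ 0) :
    ∀ t ∈ Icc a b, 0 < A t ∧ B t < 0 := by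
  let U : Set ℝ := (fun t ↦ (A t, B t)) ⁻¹' (Ioi 0 ×ˢ Iio 0)
  have hU : IsClosed (Icc a b \ U) :=
    (hAc.prodMk hBc).preimage_isClosed_of_isClosed isClosed_Icc
      (isOpen_Ioi.prod isOpen_Iio).isClosed_compl
  refine IsClosed.Icc_subset_of_forall_Ico_subset hU fun t ht hUt ↦ ?_
  have hsub : Icc a t ⊆ Icc a b := Icc_subset_Icc_right ht.2
  have hinterior : ∀ x ∈ interior (Icc a t), x ∈ Ioo a b ∧ 0 < A x ∧ B x < 0 := fun x hx ↦ by
    rw [interior_Icc] at hx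
    exact ⟨⟨hx.1, hx.2.trans_le ht.2⟩, hUt (Ioo_subset_Ico_self hx)⟩
  have hAmono : MonotoneOn A (Icc a t) :=
    monotoneOn_of_hasDerivWithinAt_nonneg (convex_Icc a t) (hAc.mono hsub)
      (fun x hx ↦ (hA x (hinterior x hx).1).hasDerivWithinAt)
      fun x hx ↦ hA' x (hinterior x hx).1 (hinterior x hx).2.1 (hinterior x hx).2.2
  have hBanti : AntitoneOn B (Icc a t) :=
    antitoneOn_of_hasDerivWithinAt_nonpos (convex_Icc a t) (hBc.mono hsub)
      (fun x hx ↦ (hB x (hinterior x hx).1).hasDerivWithinAt)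
      fun x hx ↦ hB' x (hinterior x hx).1 (hinterior x hx).2.1 (hinterior x hx).2.2
  have hat : a ∈ Icc a t := left_mem_Icc.2 ht.1
  have htt : t ∈ Icc a t := right_mem_Icc.2 ht.1
  exact ⟨hAa.trans_le (hAmono hat htt ht.1), (hBanti hat htt ht.1).trans_lt hBa⟩

theorem sqrt_neg_mul_pow_three_le {a b a' b' : ℝ} (ha : 0 < a) (hb : b < 0)
    (ha' : -(1 / 2) * (a * b) ≤ a') (hb' : b' ≤ 1 / 2 * (a * b)) :
    √(-(a * b)) ^ 3 ≤ -(a' * b + a * b') := by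
  have hab : 0 < -(a * b) := by nlinarith
  have hamgm : √(-(a * b)) ≤ (a - b) / 2 :=
    Real.sqrt_le_iff.2 ⟨by linarith, by nlinarith [sq_nonneg (a + b)]⟩
  calc √(-(a * b)) ^ 3 = -(a * b) * √(-(a * b)) := by
        rw [pow_succ, Real.sq_sqrt hab.le]
    _ ≤ -(a * b) * ((a - b) / 2) := mul_le_mul_of_nonneg_left hamgm hab.le
    _ ≤ -(a' * b + a * b') := by
        linarith [mul_le_mul_of_nonpos_right ha' hb.le, mul_le_mul_of_nonneg_left hb' ha.le]

theorem mul_sub_lt_inv_of_mul_sq_le_deriv {h h' : ℝ → ℝ} {a b c : ℝ} (hab : a ≤ b)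
    (hc : ContinuousOn h (Icc a b)) (hd : ∀ t ∈ Ioo a b, HasDerivAt h (h' t) t)
    (hpos : ∀ t ∈ Icc a b, 0 < h t) (hh' : ∀ t ∈ Ioo a b, c * h t ^ 2 ≤ h' t) :
    c * (b - a) < (h a)⁻¹ := by
  have hanti : AntitoneOn (fun t ↦ (h t)⁻¹ + c * t) (Icc a b) := by
    refine antitoneOn_of_hasDerivWithinAt_nonpos (convex_Icc a b)
      ((hc.inv₀ fun t ht ↦ (hpos t ht).ne').add (continuousOn_const.mul continuousOn_id))
      (f' := fun t ↦ -h' t / h t ^ 2 + c) (fun t ht ↦ ?_) fun t ht ↦ ?_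
    · rw [interior_Icc] at ht
      have hne := (hpos t (Ioo_subset_Icc_self ht)).ne'
      exact (((hd t ht).inv hne).add ((hasDerivAt_id t).const_mul c)
        |>.congr_deriv (by simp)).hasDerivWithinAt
    · rw [interior_Icc] at ht
      have hsq := pow_pos (hpos t (Ioo_subset_Icc_self ht)) 2
      rw [neg_div, neg_add_nonpos_iff, le_div_iff₀ hsq]
      exact hh' t ht
  have hle := hanti (left_mem_Icc.2 hab) (right_mem_Icc.2 hab) hab
  have hb := inv_pos.2 (hpos b (right_mem_Icc.2 hab))
  simp only at hle
  linarith

theorem sub_lt_two_div_sqrt_of_riccati_system {A B A' B' : ℝ → ℝ} {a b : ℝ} (hab : a ≤ b)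
    (hAc : ContinuousOn A (Icc a b)) (hBc : ContinuousOn B (Icc a b))
    (hA : ∀ t ∈ Ioo a b, HasDerivAt A (A' t) t) (hB : ∀ t ∈ Ioo a b, HasDerivAt B (B' t) t)
    (hAa : 0 < A a) (hBa : B a < 0)
    (hA' : ∀ t ∈ Ioo a b, -(1 / 2) * (A t * B t) ≤ A' t)
    (hB' : ∀ t ∈ Ioo a b, B' t ≤ 1 / 2 * (A t * B t)) :
    b - a < 2 / √(-(A a * B a)) := by
  have hsign := pos_and_neg_of_monotone_in_quadrant hAc hBc hA hB hAa hBa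
    (fun t ht hAt hBt ↦ (hA' t ht).trans' (by nlinarith))
    (fun t ht hAt hBt ↦ (hB' t ht).trans (by nlinarith))
  have hprod : ∀ t ∈ Icc a b, 0 < -(A t * B t) := fun t ht ↦
    neg_pos.2 (mul_neg_of_pos_of_neg (hsign t ht).1 (hsign t ht).2)
  have hriccati := mul_sub_lt_inv_of_mul_sq_le_deriv (c := 1 / 2) hab
    (h := fun t ↦ √(-(A t * B t)))
    (h' := fun t ↦ -(A' t * B t + A t * B' t) / (2 * √(-(A t * B t))))
    ((hAc.mul hBc).neg.sqrt)
    (fun t ht ↦ (((hA t ht).mul (hB t ht)).neg.sqrt (hprod t (Ioo_subset_Icc_self ht)).ne'))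
    (fun t ht ↦ Real.sqrt_pos.2 (hprod t ht)) fun t ht ↦ ?_
  · rw [div_eq_mul_inv]
    linarith
  · have hsign_t := hsign t (Ioo_subset_Icc_self ht)
    have hs := Real.sqrt_pos.2 (hprod t (Ioo_subset_Icc_self ht))
    rw [le_div_iff₀ (by positivity)]
    calc 1 / 2 * √(-(A t * B t)) ^ 2 * (2 * √(-(A t * B t))) = √(-(A t * B t)) ^ 3 := by ring
      _ ≤ -(A' t * B t + A t * B' t) :=
        sqrt_neg_mul_pow_three_le hsign_t.1 hsign_t.2 (hA' t ht) (hB' t ht)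

theorem continuousOn_and_hasDerivAt_of_Icc_subset {f f' : ℝ → ℝ} {S : Set ℝ} {a b : ℝ}
    (hS : Icc a b ⊆ S) (hf : ∀ t ∈ S, HasDerivWithinAt f (f' t) S t) :
    ContinuousOn f (Icc a b) ∧ ∀ t ∈ Ioo a b, HasDerivAt f (f' t) t :=
  ⟨fun t ht ↦ (hf t (hS ht)).continuousWithinAt.mono hS, fun t ht ↦
    (hf t (hS (Ioo_subset_Icc_self ht))).hasDerivAt
      (mem_of_superset (Icc_mem_nhds ht.1 ht.2) hS)⟩

theorem appendix_blowup_general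
    (T : EReal)
    (A B A' B' : ℝ → ℝ)
    (hA : ∀ t : ℝ, 0 ≤ t → (t : EReal) < T →
      HasDerivWithinAt A (A' t) {s : ℝ | 0 ≤ s ∧ (s : EReal) < T} t)
    (hB : ∀ t : ℝ, 0 ≤ t → (t : EReal) < T →
      HasDerivWithinAt B (B' t) {s : ℝ | 0 ≤ s ∧ (s : EReal) < T} t)
    (hA0 : 0 < A 0) (hB0 : B 0 < 0)
    (hA' : ∀ t : ℝ, 0 ≤ t → (t : EReal) < T → A' t ≥ -(1 / 2) * (A t * B t))
    (hB' : ∀ t : ℝ, 0 ≤ t → (t : EReal) < T → B' t ≤ (1 / 2) * (A t * B t)) :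
    T ≤ ((2 / Real.sqrt (-(A 0 * B 0)) : ℝ) : EReal) ∧ T < ⊤ := by
  set c := 2 / √(-(A 0 * B 0))
  have hc : 0 < c := div_pos two_pos (Real.sqrt_pos.2 (by nlinarith))
  have hlt : ∀ t : ℝ, 0 ≤ t → (t : EReal) < T → t < c := fun t ht htT ↦ by
    have hsub : Icc 0 t ⊆ {s : ℝ | 0 ≤ s ∧ (s : EReal) < T} := fun s hs ↦
      ⟨hs.1, (EReal.coe_le_coe_iff.2 hs.2).trans_lt htT⟩
    have hIoo := Ioo_subset_Icc_self.trans hsub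
    obtain ⟨hAc, hAd⟩ := continuousOn_and_hasDerivAt_of_Icc_subset hsub fun s hs ↦ hA s hs.1 hs.2
    obtain ⟨hBc, hBd⟩ := continuousOn_and_hasDerivAt_of_Icc_subset hsub fun s hs ↦ hB s hs.1 hs.2
    simpa only [sub_zero] using sub_lt_two_div_sqrt_of_riccati_system ht hAc hBc hAd hBd hA0 hB0
      (fun s hs ↦ hA' s (hIoo hs).1 (hIoo hs).2) (fun s hs ↦ hB' s (hIoo hs).1 (hIoo hs).2)
  have hT : T ≤ c := EReal.ge_of_forall_gt_iff_ge.1 fun t htT ↦ EReal.coe_le_coe_iff.2 <|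
    (lt_or_ge t 0).elim (fun ht ↦ (ht.trans hc).le) fun ht ↦ (hlt t ht htT).le
  exact ⟨hT, hT.trans_lt (EReal.coe_lt_top c)⟩

/-- Appendix blow-up lemma: if `A(0) > 0 > B(0)`, `A′ ≥ -(1/2)AB` and
`B′ ≤ (1/2)AB` on `[0,T)`, then `T ≤ 2/√(-A(0)B(0))`; in particular `T < ∞`. -/
theorem appendix_blowup
    (T : EReal) (hT : (0 : EReal) < T)
    (A B A' B' : ℝ → ℝ)
    (hA : ∀ t : ℝ, 0 ≤ t → (t : EReal) < T →
      HasDerivWithinAt A (A' t) {s : ℝ | 0 ≤ s ∧ (s : EReal) < T} t)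
    (hB : ∀ t : ℝ, 0 ≤ t → (t : EReal) < T →
      HasDerivWithinAt B (B' t) {s : ℝ | 0 ≤ s ∧ (s : EReal) < T} t)
    (hA0 : 0 < A 0) (hB0 : B 0 < 0)
    (hA' : ∀ t : ℝ, 0 ≤ t → (t : EReal) < T → A' t ≥ -(1 / 2) * (A t * B t))
    (hB' : ∀ t : ℝ, 0 ≤ t → (t : EReal) < T → B' t ≤ (1 / 2) * (A t * B t)) :
    T ≤ ((2 / Real.sqrt (-(A 0 * B 0)) : ℝ) : EReal) ∧ T < ⊤ :=
  appendix_blowup_general T A B A' B' hA hB hA0 hB0 hA' hB'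
end
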